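/- arXiv:1507.05261 — 5 statements merged into one kernel-verified Lean document; each statement's English description precedes it below -/
import Mathlib

section
/- For 0 < a < b, the integral ∫_a^b dx / (x√((b-x)(x-a))) equals π/√(ab). -/
/-!
On `(a, b)` the Möbius substitution `u = (a + b - 2ab/x) / (b - a)` maps `[a, b]` onto `[-1, 1]`,
and `1 - u² = 4ab (b - x)(x - a) / ((b - a) x)²`, so `arcsin u / √(ab)` is a primitive of the
integrand. It increases by `π / √(ab)` from `a` to `b`; the integrand is nonnegative, hence
integrable, and the fundamental theorem of calculus applies.
-/

open Real Set MeasureTheory intervalIntegral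

noncomputable def arcsinPrimitive (a b x : ℝ) : ℝ :=
  arcsin ((a + b - 2 * a * b / x) / (b - a)) / √(a * b)

lemma continuousOn_arcsinPrimitive (a b : ℝ) :
    ContinuousOn (arcsinPrimitive a b) {0}ᶜ := by
  refine (continuous_arcsin.comp_continuousOn ?_).div_const _
  fun_prop (disch := simp_all)

lemma arcsinPrimitive_right {a b : ℝ} (hb : b ≠ 0) (hab : a ≠ b) :
    arcsinPrimitive a b b = π / 2 / √(a * b) := by
  have : b - a ≠ 0 := sub_ne_zero.2 hab.symm
  rw [arcsinPrimitive, ← arcsin_one]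
  congr 2
  field_simp
  ring

lemma arcsinPrimitive_left {a b : ℝ} (ha : a ≠ 0) (hab : a ≠ b) :
    arcsinPrimitive a b a = -(π / 2) / √(a * b) := by
  have : b - a ≠ 0 := sub_ne_zero.2 hab.symm
  rw [arcsinPrimitive, ← arcsin_neg_one]
  congr 2
  field_simp
  ring

lemma hasDerivAt_arcsinPrimitive {a b x : ℝ} (ha : 0 < a) (hx : x ∈ Ioo a b) :
    HasDerivAt (arcsinPrimitive a b) (1 / (x * √((b - x) * (x - a)))) x := by
  obtain ⟨hax, hxb⟩ := hx
  have hx0 : 0 < x := ha.trans hax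
  have hb : 0 < b := hx0.trans hxb
  have hba : 0 < b - a := by linarith
  have hbxa : 0 < (b - x) * (x - a) := mul_pos (by linarith) (by linarith)
  let u (y : ℝ) : ℝ := (a + b - 2 * a * b / y) / (b - a)
  have hu : HasDerivAt u (2 * a * b / ((b - a) * x ^ 2)) x := by
    refine ((((hasDerivAt_id x).inv hx0.ne').const_mul (2 * a * b)).const_sub (a + b)
      |>.div_const (b - a)).congr_deriv ?_
    simp only [id]
    field_simp
  have hne : u x ≠ -1 ∧ u x ≠ 1 := by
    constructor <;> intro h <;> simp only [u] at h <;> field_simp at h <;> nlinarith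
  have hsqrt : √(1 - u x ^ 2) = 2 * √(a * b) * √((b - x) * (x - a)) / ((b - a) * x) := by
    have : 1 - u x ^ 2 = (2 * √(a * b) * √((b - x) * (x - a)) / ((b - a) * x)) ^ 2 := by
      rw [div_pow _ ((b - a) * x), mul_pow, mul_pow, sq_sqrt (by positivity),
        sq_sqrt hbxa.le]
      simp only [u]
      field_simp
      ring
    rw [this, sqrt_sq (by positivity)]
  refine (((hasDerivAt_arcsin hne.1 hne.2).comp x hu).div_const √(a * b)).congr_deriv ?_
  have : √(a * b) ^ 2 = a * b := sq_sqrt (by positivity)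
  rw [hsqrt]
  field_simp
  rw [this]

theorem integral_inv_x_div_sqrt (a b : ℝ) (ha : 0 < a) (hab : a < b) :
    ∫ x in a..b, 1 / (x * Real.sqrt ((b - x) * (x - a))) = Real.pi / Real.sqrt (a * b) := by
  have hcont : ContinuousOn (arcsinPrimitive a b) (Icc a b) :=
    (continuousOn_arcsinPrimitive a b).mono fun x hx => (ha.trans_le hx.1).ne'
  have hderiv : ∀ x ∈ Ioo a b,
      HasDerivAt (arcsinPrimitive a b) (1 / (x * √((b - x) * (x - a)))) x :=
    fun _ hx => hasDerivAt_arcsinPrimitive ha hx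
  have hnonneg : ∀ x ∈ Ioo a b, 0 ≤ 1 / (x * √((b - x) * (x - a))) := fun x hx => by
    have := ha.trans hx.1
    positivity
  have hint : IntervalIntegrable (fun x => 1 / (x * √((b - x) * (x - a)))) volume a b :=
    (intervalIntegrable_iff_integrableOn_Ioc_of_le hab.le).2
      (integrableOn_deriv_of_nonneg hcont hderiv hnonneg)
  rw [integral_eq_sub_of_hasDerivAt_of_le hab.le hcont hderiv hint,
    arcsinPrimitive_right (ha.trans hab).ne' hab.ne, arcsinPrimitive_left ha.ne' hab.ne]
  ring
end

section
/- For 0 < a < b, the integral ∫_a^b dx / (x²√((b-x)(x-a))) equals (a+b)π / (2(ab)^{3/2}). -/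
/-!
Substituting `x = 1 / t` turns the integrand into `t / √((b t - 1) (1 - a t))`, whose primitive is
an arcsine plus an algebraic term; pulling it back gives `invSqSqrtPrimitive a b`, and the
fundamental theorem of calculus evaluates the integral. The integral is improper at both ends, but
a nonnegative derivative of a function continuous on `[a, b]` is automatically integrable
(`integrableOn_deriv_of_nonneg`).
-/

open Real Set MeasureTheory intervalIntegral

noncomputable def arcsinArg (a b x : ℝ) : ℝ := ((a + b) * x - 2 * (a * b)) / ((b - a) * x)

section

variable {a b x : ℝ}

lemma arcsinArg_left (ha : a ≠ 0) (hab : a ≠ b) : arcsinArg a b a = -1 := by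
  rw [arcsinArg, div_eq_iff (mul_ne_zero (sub_ne_zero.2 hab.symm) ha)]
  ring

lemma arcsinArg_right (hb : b ≠ 0) (hab : a ≠ b) : arcsinArg a b b = 1 := by
  rw [arcsinArg, div_eq_one_iff_eq (mul_ne_zero (sub_ne_zero.2 hab.symm) hb)]
  ring

lemma one_sub_arcsinArg_sq (hx : x ≠ 0) (hab : a ≠ b) :
    1 - arcsinArg a b x ^ 2 = 4 * (a * b) * ((b - x) * (x - a)) / ((b - a) * x) ^ 2 := by
  have : b - a ≠ 0 := sub_ne_zero.2 hab.symm
  rw [arcsinArg]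
  field_simp
  ring

lemma hasDerivAt_arcsinArg (hx : x ≠ 0) (hab : a ≠ b) :
    HasDerivAt (arcsinArg a b) (2 * (a * b) / ((b - a) * x ^ 2)) x := by
  have : b - a ≠ 0 := sub_ne_zero.2 hab.symm
  have h := (((hasDerivAt_id' x).const_mul (a + b)).sub_const (2 * (a * b))).div
    ((hasDerivAt_id' x).const_mul (b - a)) (mul_ne_zero this hx)
  refine h.congr_deriv ?_
  field_simp
  ring

lemma hasDerivAt_arcsin_arcsinArg (ha : 0 < a) (hx : x ∈ Ioo a b) :
    HasDerivAt (fun x ↦ arcsin (arcsinArg a b x))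
      (√(a * b) / (x * √((b - x) * (x - a)))) x := by
  obtain ⟨hax, hxb⟩ := hx
  have hx0 : 0 < x := ha.trans hax
  have hba : 0 < b - a := by linarith
  have hab : 0 < a * b := mul_pos ha (by linarith)
  have hQ : 0 < (b - x) * (x - a) := mul_pos (by linarith) (by linarith)
  have hdisc := one_sub_arcsinArg_sq hx0.ne' (hax.trans hxb).ne
  have hsqrt : √(1 - arcsinArg a b x ^ 2)
      = 2 * √(a * b) * √((b - x) * (x - a)) / ((b - a) * x) := by
    rw [hdisc, sqrt_div' _ (by positivity), sqrt_sq (by positivity), sqrt_mul (by positivity),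
      sqrt_mul (by positivity), show (4 : ℝ) = 2 ^ 2 by norm_num, sqrt_sq (by norm_num)]
  have hlt : 0 < 1 - arcsinArg a b x ^ 2 := by rw [hdisc]; positivity
  have h1 : arcsinArg a b x ≠ -1 := by nlinarith
  have h1' : arcsinArg a b x ≠ 1 := by nlinarith
  refine ((hasDerivAt_arcsin h1 h1').comp x
    (hasDerivAt_arcsinArg hx0.ne' (hax.trans hxb).ne)).congr_deriv ?_
  rw [hsqrt]
  have : 0 < √(a * b) := sqrt_pos.2 hab
  have : 0 < √((b - x) * (x - a)) := sqrt_pos.2 hQ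
  field_simp
  rw [sq_sqrt hab.le]

lemma hasDerivAt_sqrt_div (hab : a * b ≠ 0) (hx : x ∈ Ioo a b) (hx0 : x ≠ 0) :
    HasDerivAt (fun x ↦ √((b - x) * (x - a)) / (a * b * x))
      ((2 * (a * b) - (a + b) * x) / (2 * (a * b) * x ^ 2 * √((b - x) * (x - a)))) x := by
  have hQ : 0 < (b - x) * (x - a) := mul_pos (by linarith [hx.2]) (by linarith [hx.1])
  have hQ' : HasDerivAt (fun x ↦ (b - x) * (x - a)) (a + b - 2 * x) x :=
    (((hasDerivAt_id' x).const_sub b).mul ((hasDerivAt_id' x).sub_const a)).congr_deriv (by ring)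
  refine ((hQ'.sqrt hQ.ne').div ((hasDerivAt_id' x).const_mul (a * b))
    (mul_ne_zero hab hx0)).congr_deriv ?_
  have hs := sqrt_pos.2 hQ
  field_simp
  rw [sq_sqrt hQ.le]
  ring

end

noncomputable def invSqSqrtPrimitive (a b x : ℝ) : ℝ :=
  (a + b) / (2 * (a * b) ^ ((3 : ℝ) / 2)) * arcsin (arcsinArg a b x)
    + √((b - x) * (x - a)) / (a * b * x)

section

variable {a b x : ℝ}

lemma rpow_three_halves {y : ℝ} (hy : 0 ≤ y) : y ^ ((3 : ℝ) / 2) = y * √y := by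
  rw [show (3 : ℝ) / 2 = 1 + 1 / 2 by norm_num, rpow_add' hy (by norm_num), rpow_one,
    sqrt_eq_rpow]

lemma hasDerivAt_invSqSqrtPrimitive (ha : 0 < a) (hx : x ∈ Ioo a b) :
    HasDerivAt (invSqSqrtPrimitive a b) (1 / (x ^ 2 * √((b - x) * (x - a)))) x := by
  have hx0 : 0 < x := ha.trans hx.1
  have hab : 0 < a * b := mul_pos ha (hx0.trans hx.2)
  have hQ : 0 < (b - x) * (x - a) := mul_pos (by linarith [hx.2]) (by linarith [hx.1])
  have := sqrt_pos.2 hQ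
  refine (((hasDerivAt_arcsin_arcsinArg ha hx).const_mul _).add
    (hasDerivAt_sqrt_div hab.ne' hx hx0.ne')).congr_deriv ?_
  have := sqrt_pos.2 hab
  have : 0 < b := hx0.trans hx.2
  rw [rpow_three_halves hab.le]
  field_simp
  ring

lemma continuousOn_invSqSqrtPrimitive (ha : 0 < a) (hab : a < b) :
    ContinuousOn (invSqSqrtPrimitive a b) (Icc a b) := by
  unfold invSqSqrtPrimitive arcsinArg
  fun_prop (disch :=
    intro x (hx : x ∈ Icc a b); have := ha.trans_le hx.1; have := ha.trans hab; positivity)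

lemma invSqSqrtPrimitive_right_sub_left (ha : 0 < a) (hab : a < b) :
    invSqSqrtPrimitive a b b - invSqSqrtPrimitive a b a
      = (a + b) * π / (2 * (a * b) ^ ((3 : ℝ) / 2)) := by
  simp [invSqSqrtPrimitive, arcsinArg_left ha.ne' hab.ne, arcsinArg_right (ha.trans hab).ne' hab.ne]
  ring

end

theorem integral_inv_xsq_div_sqrt (a b : ℝ) (ha : 0 < a) (hab : a < b) :
    ∫ x in a..b, 1 / (x ^ 2 * Real.sqrt ((b - x) * (x - a)))
      = (a + b) * Real.pi / (2 * (a * b) ^ ((3 : ℝ) / 2)) := by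
  have hcont := continuousOn_invSqSqrtPrimitive ha hab
  have hderiv : ∀ x ∈ Ioo a b,
      HasDerivAt (invSqSqrtPrimitive a b) (1 / (x ^ 2 * √((b - x) * (x - a)))) x :=
    fun _ ↦ hasDerivAt_invSqSqrtPrimitive ha
  have hint : IntervalIntegrable (fun x ↦ 1 / (x ^ 2 * √((b - x) * (x - a)))) volume a b :=
    (intervalIntegrable_iff_integrableOn_Ioc_of_le hab.le).2 <|
      integrableOn_deriv_of_nonneg hcont hderiv fun x _ ↦ by positivity
  rw [integral_eq_sub_of_hasDerivAt_of_le hab.le hcont hderiv hint,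
    invSqSqrtPrimitive_right_sub_left ha hab]
end

section
/- For 0 < a < b, the integral ∫_a^b ln(x) dx / √((b-x)(x-a)) equals 2π ln((√a+√b)/2). -/
/-!
Substituting `x = (a + b) / 2 - (b - a) / 2 * cos θ` turns the integral into
`∫ θ in 0..π, log x(θ)`. With `ρ = (√a + √b) / 2` and `w = (√b - √a) / 2` one has
`x(θ) = ‖ρ e^{iθ} - w‖ ^ 2`, and since `|w| ≤ ρ`, the average of `log ‖z - w‖` over the circle
`‖z‖ = ρ` is `log ρ` (mean value property of the harmonic function `log ‖z - w‖`). By the symmetry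
`θ ↦ 2π - θ`, the half circle carries half of the full-circle integral `4π log ρ`.
-/

open Real intervalIntegral MeasureTheory

theorem integral_comp_cos_zero_two_pi_eq_two_smul {E : Type*} [NormedAddCommGroup E]
    [NormedSpace ℝ E] (f : ℝ → E) :
    ∫ θ in 0..2 * π, f (cos θ) = (2 : ℝ) • ∫ θ in 0..π, f (cos θ) := by
  have hsymm : ∀ θ, f (cos (2 * π - θ)) = f (cos θ) := fun θ => by rw [cos_two_pi_sub]
  have hreflect : ∫ θ in π..2 * π, f (cos θ) = ∫ θ in 0..π, f (cos θ) := by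
    have h := integral_comp_sub_left (fun θ => f (cos θ)) (2 * π) (a := 0) (b := π)
    rwa [funext hsymm, sub_zero, two_mul, add_sub_cancel_right, ← two_mul, eq_comm] at h
  by_cases hint : IntervalIntegrable (fun θ => f (cos θ)) volume 0 π
  · have hint' : IntervalIntegrable (fun θ => f (cos θ)) volume π (2 * π) := by
      have h := (hint.comp_sub_left (2 * π)).symm
      rwa [funext hsymm, sub_zero, two_mul, add_sub_cancel_right, ← two_mul] at h
    rw [← integral_add_adjacent_intervals hint hint', hreflect, two_smul]
  · have hπ : π ∈ Set.uIcc 0 (2 * π) := Set.mem_uIcc_of_le pi_pos.le (by linarith [pi_pos])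
    have hint' : ¬IntervalIntegrable (fun θ => f (cos θ)) volume 0 (2 * π) := fun h =>
      hint (h.mono_set (Set.uIcc_subset_uIcc_left hπ))
    rw [integral_undef hint, integral_undef hint', smul_zero]

theorem norm_circleMap_zero_sub_ofReal_sq (ρ w θ : ℝ) :
    ‖circleMap 0 ρ θ - w‖ ^ 2 = ρ ^ 2 + w ^ 2 - 2 * ρ * w * cos θ := by
  rw [Complex.sq_norm, Complex.normSq_apply]
  simp only [circleMap, zero_add, Complex.sub_re, Complex.mul_re, Complex.ofReal_re,
    Complex.exp_ofReal_mul_I_re, Complex.ofReal_im, Complex.exp_ofReal_mul_I_im, zero_mul,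
    sub_zero, Complex.sub_im, Complex.mul_im, add_zero]
  nlinarith [sin_sq_add_cos_sq θ]

theorem integral_log_sq_add_sq_sub_two_mul_mul_cos {ρ w : ℝ} (h : |w| ≤ |ρ|) :
    ∫ θ in 0..2 * π, log (ρ ^ 2 + w ^ 2 - 2 * ρ * w * cos θ) = 4 * π * log ρ := by
  have hpoint : ∀ θ, log (ρ ^ 2 + w ^ 2 - 2 * ρ * w * cos θ)
      = 2 * log ‖circleMap 0 ρ θ - w‖ := fun θ => by
    rw [← norm_circleMap_zero_sub_ofReal_sq, log_pow, Nat.cast_ofNat]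
  have havg := circleAverage_log_norm_sub_const_of_mem_closedBall (a := (w : ℂ)) (c := 0)
    (R := ρ) (by simpa using h)
  rw [circleAverage_def, smul_eq_mul, inv_mul_eq_iff_eq_mul₀ (by positivity)] at havg
  simp_rw [hpoint]
  rw [intervalIntegral.integral_const_mul, havg]
  ring

theorem integral_div_sqrt_mul_sub_eq_integral_comp_cos (f : ℝ → ℝ) {a b : ℝ} (hab : a < b) :
    ∫ x in a..b, f x / √((b - x) * (x - a))
      = ∫ θ in 0..π, f ((a + b) / 2 - (b - a) / 2 * cos θ) := by
  set p := (a + b) / 2 with hp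
  set q := (b - a) / 2 with hq
  have hq_pos : 0 < q := by linarith
  have himage : (fun θ => p - q * cos θ) '' Set.Ioo 0 π = Set.Ioo a b := by
    ext x
    constructor
    · rintro ⟨θ, hθ, rfl⟩
      obtain ⟨h₁, h₂⟩ := mapsTo_cos_Ioo hθ
      constructor <;> nlinarith
    · rintro ⟨hax, hxb⟩
      have hy : (p - x) / q ∈ Set.Ioo (-1) 1 := by
        rw [Set.mem_Ioo, lt_div_iff₀ hq_pos, div_lt_iff₀ hq_pos]
        constructor <;> linarith
      refine ⟨arccos ((p - x) / q), cosPartialHomeomorph.map_target hy, ?_⟩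
      simp only [cos_arccos hy.1.le hy.2.le]
      field_simp
      ring
  have hinj : Set.InjOn (fun θ => p - q * cos θ) (Set.Ioo 0 π) := fun s hs t ht hst =>
    injOn_cos (Set.Ioo_subset_Icc_self hs) (Set.Ioo_subset_Icc_self ht)
      (mul_left_cancel₀ hq_pos.ne' (sub_right_injective hst))
  have hderiv : ∀ θ ∈ Set.Ioo 0 π,
      HasDerivWithinAt (fun θ => p - q * cos θ) (q * sin θ) (Set.Ioo 0 π) θ := fun θ _ => by
    simpa using ((hasDerivAt_cos θ).const_mul q).const_sub p |>.hasDerivWithinAt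
  have hsubst := integral_image_eq_integral_abs_deriv_smul measurableSet_Ioo hderiv hinj
    (fun x => f x / √((b - x) * (x - a)))
  rw [himage] at hsubst
  have hpoint : ∀ θ ∈ Set.Ioo 0 π, |q * sin θ| •
      (f (p - q * cos θ) / √((b - (p - q * cos θ)) * ((p - q * cos θ) - a)))
        = f (p - q * cos θ) := by
    intro θ hθ
    have hsin : 0 < q * sin θ := mul_pos hq_pos (sin_pos_of_mem_Ioo hθ)
    have hsq : (b - (p - q * cos θ)) * ((p - q * cos θ) - a) = (q * sin θ) ^ 2 := by
      rw [hp, hq]; linear_combination -(b - a) ^ 2 / 4 * sin_sq_add_cos_sq θ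
    rw [hsq, sqrt_sq hsin.le, abs_of_pos hsin, smul_eq_mul, mul_div_cancel₀ _ hsin.ne']
  rw [integral_of_le hab.le, integral_Ioc_eq_integral_Ioo, hsubst,
    setIntegral_congr_fun measurableSet_Ioo hpoint, integral_of_le pi_pos.le,
    integral_Ioc_eq_integral_Ioo]

theorem integral_log_div_sqrt (a b : ℝ) (ha : 0 < a) (hab : a < b) :
    ∫ x in a..b, Real.log x / Real.sqrt ((b - x) * (x - a))
      = 2 * Real.pi * Real.log ((Real.sqrt a + Real.sqrt b) / 2) := by
  set ρ := (√a + √b) / 2 with hρ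
  set w := (√b - √a) / 2 with hw
  have hρw : |w| ≤ |ρ| := abs_le_abs (by linarith [sqrt_nonneg a]) (by linarith [sqrt_nonneg b])
  have hcos : ∀ θ, (a + b) / 2 - (b - a) / 2 * cos θ = ρ ^ 2 + w ^ 2 - 2 * ρ * w * cos θ := by
    intro θ
    have h₁ := sq_sqrt ha.le
    have h₂ := sq_sqrt (ha.trans hab).le
    rw [hρ, hw]
    linear_combination -(1 + cos θ) / 2 * h₁ - (1 - cos θ) / 2 * h₂
  calc ∫ x in a..b, log x / √((b - x) * (x - a))
      = ∫ θ in 0..π, log (ρ ^ 2 + w ^ 2 - 2 * ρ * w * cos θ) := by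
        simp only [integral_div_sqrt_mul_sub_eq_integral_comp_cos log hab, hcos]
    _ = (∫ θ in 0..2 * π, log (ρ ^ 2 + w ^ 2 - 2 * ρ * w * cos θ)) / 2 := by
        rw [integral_comp_cos_zero_two_pi_eq_two_smul
            (fun c => log (ρ ^ 2 + w ^ 2 - 2 * ρ * w * c)), smul_eq_mul,
          mul_div_cancel_left₀ _ two_ne_zero]
    _ = 2 * π * log ρ := by
        rw [integral_log_sq_add_sq_sub_two_mul_mul_cos hρw]
        ring
end

section
/- For 0 < a < b, the integral ∫_a^b ln(x) dx / (x√((b-x)(x-a))) equals (2π/√(ab)) ln(2√(ab)/(√a+√b)). -/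
/-!
The inversion `x ↦ a b / x` maps `(a, b)` onto itself and turns the integral into
`(a b)^(-1/2) ∫ₐᵇ (log (a b) - log x) dx / √((b - x) (x - a))`. The substitution
`x = (a + b) / 2 - (b - a) / 2 · cos θ` turns `dx / √((b - x) (x - a))` into `dθ` on `(0, π)`.
With `c = (√a + √b) / 2` and `ρ = (√b - √a) / 2` one has `x = |c e^{iθ} - ρ|²`, so
`∫₀^π log x dθ = 2π log c` is the mean value of `log |z - ρ|` over the circle `|z| = c ≥ |ρ|`.
-/

open Real MeasureTheory Set intervalIntegral

theorem cos_image_Ioo : cos '' Ioo 0 π = Ioo (-1) 1 := by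
  simpa using cosPartialHomeomorph.image_source_eq_target

theorem setIntegral_Ioo_div_sqrt_eq_integral_cos {a b : ℝ} (hab : a < b) (g : ℝ → ℝ) :
    ∫ x in Ioo a b, g x / √((b - x) * (x - a))
      = ∫ θ in 0..π, g ((a + b) / 2 - (b - a) / 2 * cos θ) := by
  set r := (b - a) / 2 with hr_def
  have hr : 0 < r := half_pos (sub_pos.2 hab)
  set x : ℝ → ℝ := fun θ => (a + b) / 2 - r * cos θ
  have hx_deriv : ∀ θ ∈ Ioo 0 π, HasDerivWithinAt x (r * sin θ) (Ioo 0 π) θ := fun θ _ => by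
    simpa using ((hasDerivAt_cos θ).const_mul r).const_sub ((a + b) / 2) |>.hasDerivWithinAt
  have hx_inj : InjOn x (Ioo 0 π) := fun θ hθ φ hφ h =>
    injOn_cos (Ioo_subset_Icc_self hθ) (Ioo_subset_Icc_self hφ)
      (mul_left_cancel₀ hr.ne' (by simpa [x] using h))
  have hx_image : x '' Ioo 0 π = Ioo a b := by
    have : x = (fun t => r * t + (a + b) / 2) ∘ Neg.neg ∘ cos := by
      ext θ
      simp only [x, Function.comp_apply]
      ring
    rw [this, image_comp, image_comp, cos_image_Ioo, image_neg_eq_neg, neg_Ioo, neg_neg,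
      image_affine_Ioo hr]
    congr 1 <;> ring
  have hsqrt : ∀ θ ∈ Ioo 0 π, √((b - x θ) * (x θ - a)) = r * sin θ := fun θ hθ => by
    rw [← sqrt_sq (mul_pos hr (sin_pos_of_pos_of_lt_pi hθ.1 hθ.2)).le]
    congr 1
    simp only [x, hr_def]
    linear_combination (-r ^ 2) * sin_sq_add_cos_sq θ
  rw [← hx_image, integral_image_eq_integral_abs_deriv_smul measurableSet_Ioo hx_deriv hx_inj,
    integral_of_le pi_pos.le, integral_Ioc_eq_integral_Ioo]
  refine setIntegral_congr_fun measurableSet_Ioo fun θ hθ => ?_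
  have hrs : 0 < r * sin θ := mul_pos hr (sin_pos_of_pos_of_lt_pi hθ.1 hθ.2)
  simp only [smul_eq_mul, hsqrt θ hθ, abs_of_pos hrs]
  exact mul_div_cancel₀ _ hrs.ne'

theorem setIntegral_Ioo_div_mul_sqrt_eq_comp_div {a b : ℝ} (ha : 0 < a) (hab : a < b)
    (g : ℝ → ℝ) :
    ∫ x in Ioo a b, g x / (x * √((b - x) * (x - a)))
      = (√(a * b))⁻¹ * ∫ x in Ioo a b, g (a * b / x) / √((b - x) * (x - a)) := by
  have hb : 0 < b := ha.trans hab
  have hab₀ : 0 < a * b := mul_pos ha hb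
  have hmaps : MapsTo (a * b / ·) (Ioo a b) (Ioo a b) := fun x ⟨hax, hxb⟩ => by
    have hx : 0 < x := ha.trans hax
    constructor
    · rw [lt_div_iff₀ hx]; nlinarith
    · rw [div_lt_iff₀ hx]; nlinarith
  have hinv_image : (a * b / ·) '' Ioo a b = Ioo a b := by
    refine (hmaps.image_subset).antisymm fun y hy => ⟨a * b / y, hmaps hy, ?_⟩
    exact div_div_cancel₀ hab₀.ne'
  have hinv_deriv : ∀ x ∈ Ioo a b, HasDerivWithinAt (a * b / ·) (-(a * b / x ^ 2)) (Ioo a b) x :=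
    fun x hx => by
      simpa [div_eq_mul_inv] using
        ((hasDerivAt_inv (ha.trans hx.1).ne').const_mul (a * b)).hasDerivWithinAt
  have hinv_inj : InjOn (a * b / ·) (Ioo a b) := fun _ _ _ _ h => by
    simpa [div_eq_mul_inv, ha.ne', hb.ne'] using h
  conv_lhs => rw [← hinv_image,
    integral_image_eq_integral_abs_deriv_smul measurableSet_Ioo hinv_deriv hinv_inj]
  rw [← MeasureTheory.integral_const_mul]
  refine setIntegral_congr_fun measurableSet_Ioo fun x hx => ?_
  have hx₀ : 0 < x := ha.trans hx.1
  have hsqrt : √((b - a * b / x) * (a * b / x - a)) = √(a * b) * √((b - x) * (x - a)) / x := by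
    have hprod : (b - a * b / x) * (a * b / x - a) = a * b * ((b - x) * (x - a)) / x ^ 2 := by
      field_simp [hb.ne']
    rw [hprod, sqrt_div' _ (sq_nonneg x), sqrt_sq hx₀.le, sqrt_mul hab₀.le]
  simp only [smul_eq_mul, hsqrt, abs_neg, abs_of_pos (by positivity : 0 < a * b / x ^ 2)]
  field_simp [hb.ne']

theorem integral_log_sq_sub_two_mul_mul_cos_add_sq {c ρ : ℝ} (h : |ρ| ≤ |c|) :
    ∫ θ in 0..π, log (c ^ 2 - 2 * c * ρ * cos θ + ρ ^ 2) = 2 * π * log c := by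
  set F : ℝ → ℝ := fun θ => log (c ^ 2 - 2 * c * ρ * cos θ + ρ ^ 2)
  have hnorm_sq : ∀ θ, ‖circleMap 0 c θ - ρ‖ ^ 2 = c ^ 2 - 2 * c * ρ * cos θ + ρ ^ 2 := by
    intro θ
    simp only [Complex.sq_norm, Complex.normSq_apply, circleMap, zero_add, Complex.sub_re,
      Complex.sub_im, Complex.mul_re, Complex.mul_im, Complex.ofReal_re, Complex.ofReal_im,
      Complex.exp_ofReal_mul_I_re, Complex.exp_ofReal_mul_I_im]
    linear_combination c ^ 2 * sin_sq_add_cos_sq θ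
  have hF_circle : F = fun θ => 2 * log ‖circleMap 0 c θ - ρ‖ := by
    ext θ
    simp only [F, ← hnorm_sq, log_pow, Nat.cast_ofNat]
  have hF_int : IntervalIntegrable F volume 0 (2 * π) := by
    rw [hF_circle]
    exact (circleIntegrable_log_norm_sub_const (a := (ρ : ℂ)) (c := 0) c).const_mul 2
  have hF_full : ∫ θ in 0..2 * π, F θ = 2 * (2 * π * log c) := by
    have hρ : (ρ : ℂ) ∈ Metric.closedBall 0 |c| := by simpa using h
    have := circleAverage_log_norm_sub_const_of_mem_closedBall hρ
    rw [circleAverage_def, smul_eq_mul, inv_mul_eq_iff_eq_mul₀ (by positivity)] at this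
    rw [hF_circle, intervalIntegral.integral_const_mul, this]
  have hF_reflect : ∫ θ in π..2 * π, F θ = ∫ θ in 0..π, F θ := by
    have := intervalIntegral.integral_comp_sub_left F (2 * π) (a := 0) (b := π)
    rw [show 2 * π - π = π by ring, sub_zero] at this
    rw [← this]
    simp only [F, cos_two_pi_sub]
  have hπ : π ∈ uIcc 0 (2 * π) := by
    rw [uIcc_of_le (by positivity)]
    constructor <;> linarith [pi_pos]
  rw [← integral_add_adjacent_intervals (hF_int.mono_set (uIcc_subset_uIcc_left hπ))
    (hF_int.mono_set (uIcc_subset_uIcc_right hπ)), hF_reflect] at hF_full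
  linarith

theorem integral_log_add_div_two_sub_sub_div_two_mul_cos {a b : ℝ} (ha : 0 ≤ a) (hb : 0 ≤ b) :
    ∫ θ in 0..π, log ((a + b) / 2 - (b - a) / 2 * cos θ) = 2 * π * log ((√a + √b) / 2) := by
  have hc : ∀ θ, (a + b) / 2 - (b - a) / 2 * cos θ
      = ((√a + √b) / 2) ^ 2 - 2 * ((√a + √b) / 2) * ((√b - √a) / 2) * cos θ
        + ((√b - √a) / 2) ^ 2 := fun θ => by
    linear_combination (-(1 + cos θ) / 2) * sq_sqrt ha - ((1 - cos θ) / 2) * sq_sqrt hb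
  simp_rw [hc]
  refine integral_log_sq_sub_two_mul_mul_cos_add_sq ?_
  rw [abs_le, abs_of_nonneg (by positivity)]
  constructor <;> linarith [sqrt_nonneg a, sqrt_nonneg b]

theorem integral_log_div_x_sqrt (a b : ℝ) (ha : 0 < a) (hab : a < b) :
    ∫ x in a..b, Real.log x / (x * Real.sqrt ((b - x) * (x - a)))
      = (2 * Real.pi / Real.sqrt (a * b))
          * Real.log (2 * Real.sqrt (a * b) / (Real.sqrt a + Real.sqrt b)) := by
  have hb : 0 < b := ha.trans hab
  have hab₀ : 0 < a * b := mul_pos ha hb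
  have hx_pos : ∀ θ, 0 < (a + b) / 2 - (b - a) / 2 * cos θ := fun θ => by
    nlinarith [cos_le_one θ]
  have hlog_int :
      IntervalIntegrable (fun θ => log ((a + b) / 2 - (b - a) / 2 * cos θ)) volume 0 π :=
    ((continuous_const.sub (continuous_const.mul continuous_cos)).log
      fun θ => (hx_pos θ).ne').intervalIntegrable 0 π
  rw [integral_of_le hab.le, integral_Ioc_eq_integral_Ioo,
    setIntegral_Ioo_div_mul_sqrt_eq_comp_div ha hab, setIntegral_Ioo_div_sqrt_eq_integral_cos hab,
    integral_congr fun θ _ => log_div hab₀.ne' (hx_pos θ).ne',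
    integral_sub intervalIntegrable_const hlog_int, intervalIntegral.integral_const,
    integral_log_add_div_two_sub_sub_div_two_mul_cos ha.le hb.le]
  rw [show 2 * √(a * b) / (√a + √b) = √(a * b) / ((√a + √b) / 2) by field_simp,
    log_div (sqrt_pos.2 hab₀).ne' (by positivity), log_sqrt hab₀.le]
  field_simp
  ring
end

section
/- If g satisfies the Painlevé III' equation g'' = (g')²/g − g'/s + 2g²/s² + α/(2s) − 1/(4g) on an interval where g ≠ 0 and s ≠ 0, and H is defined by H(s) = (s g'(s) − g(s))²/(4 g(s)²) + (4α s g(s) − s²)/(16 g(s)²) − g(s) − α²/4, then H satisfies (s H'')² + 4(H')²(s H' − H) − (α H' + 1/2)² = 0. -/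
/-!
Along a solution of Painlevé III', the Hamiltonian `H` satisfies `H' = -g/s`: this is where the
equation is used. Differentiating once more gives `H'' = (g - s g')/s²`, and substituting `H`, `H'`
and `H''` into the sigma form leaves a rational identity in `s`, `g`, `g'`.
-/

noncomputable def sigmaHamiltonian (α s x y : ℝ) : ℝ :=
  (s * y - x) ^ 2 / (4 * x ^ 2) + (4 * α * s * x - s ^ 2) / (16 * x ^ 2) - x - α ^ 2 / 4

theorem hasDerivAt_sigmaHamiltonian_of_painleveIII {α s : ℝ} {g : ℝ → ℝ} (hs : s ≠ 0)
    (hg : DifferentiableAt ℝ g s) (hg' : DifferentiableAt ℝ (deriv g) s) (hgs : g s ≠ 0)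
    (hode : deriv (deriv g) s
        = (deriv g s) ^ 2 / g s - deriv g s / s + 2 * (g s) ^ 2 / s ^ 2
            + α / (2 * s) - 1 / (4 * g s)) :
    HasDerivAt (fun t => sigmaHamiltonian α t (g t) (deriv g t)) (-g s / s) s := by
  have hp := hg.hasDerivAt
  have hq := hg'.hasDerivAt
  have hid := hasDerivAt_id' s
  have hkinetic := (((hid.fun_mul hq).fun_sub hp).fun_pow 2).fun_div
    ((hp.fun_pow 2).const_mul 4) (by positivity)
  have hpotential := (((hid.const_mul (4 * α)).fun_mul hp).fun_sub (hid.fun_pow 2)).fun_div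
    ((hp.fun_pow 2).const_mul 16) (by positivity)
  have hH := ((hkinetic.fun_add hpotential).fun_sub hp).sub_const (α ^ 2 / 4)
  refine hH.congr_deriv ?_
  rw [hode]
  field_simp
  ring

theorem sigma_form_identity (α s x y : ℝ) (hs : s ≠ 0) (hx : x ≠ 0) :
    (s * ((x - s * y) / s ^ 2)) ^ 2 + 4 * (-x / s) ^ 2 * (s * (-x / s) - sigmaHamiltonian α s x y)
      - (α * (-x / s) + 1 / 2) ^ 2 = 0 := by
  unfold sigmaHamiltonian
  field_simp
  ring

theorem sigma_form_of_hasDerivAt {α s : ℝ} {I : Set ℝ} {g H : ℝ → ℝ} (hI : IsOpen I)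
    (hsI : s ∈ I) (hs : s ≠ 0) (hg : DifferentiableAt ℝ g s) (hgs : g s ≠ 0)
    (hHs : H s = sigmaHamiltonian α s (g s) (deriv g s))
    (hH : ∀ t ∈ I, HasDerivAt H (-g t / t) t) :
    (s * deriv (deriv H) s) ^ 2 + 4 * deriv H s ^ 2 * (s * deriv H s - H s)
      - (α * deriv H s + 1 / 2) ^ 2 = 0 := by
  have hderiv : deriv H =ᶠ[nhds s] fun t => -g t / t :=
    Filter.eventually_of_mem (hI.mem_nhds hsI) fun t ht => (hH t ht).deriv
  have hH'' : HasDerivAt (deriv H) ((g s - s * deriv g s) / s ^ 2) s :=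
    (hg.hasDerivAt.fun_neg.div (hasDerivAt_id' s) hs).congr_of_eventuallyEq hderiv
      |>.congr_deriv (by ring)
  rw [(hH s hsI).deriv, hH''.deriv, hHs]
  exact sigma_form_identity α s (g s) (deriv g s) hs hgs

theorem sigma_form_from_painleveIII' (α : ℝ) (I : Set ℝ) (hI : IsOpen I)
    (hIpos : I ⊆ Set.Ioi (0 : ℝ)) (g : ℝ → ℝ)
    (hg1 : ∀ s ∈ I, DifferentiableAt ℝ g s)
    (hg2 : ∀ s ∈ I, DifferentiableAt ℝ (deriv g) s)
    (hgne : ∀ s ∈ I, g s ≠ 0)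
    (hode : ∀ s ∈ I,
      deriv (deriv g) s
        = (deriv g s) ^ 2 / g s - deriv g s / s + 2 * (g s) ^ 2 / s ^ 2
            + α / (2 * s) - 1 / (4 * g s)) :
    ∀ s ∈ I,
      (s * deriv (deriv (fun s : ℝ =>
          (s * deriv g s - g s) ^ 2 / (4 * (g s) ^ 2)
            + (4 * α * s * g s - s ^ 2) / (16 * (g s) ^ 2) - g s - α ^ 2 / 4)) s) ^ 2
        + 4 * (deriv (fun s : ℝ =>
            (s * deriv g s - g s) ^ 2 / (4 * (g s) ^ 2)
              + (4 * α * s * g s - s ^ 2) / (16 * (g s) ^ 2) - g s - α ^ 2 / 4) s) ^ 2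
          * (s * deriv (fun s : ℝ =>
              (s * deriv g s - g s) ^ 2 / (4 * (g s) ^ 2)
                + (4 * α * s * g s - s ^ 2) / (16 * (g s) ^ 2) - g s - α ^ 2 / 4) s
            - ((s * deriv g s - g s) ^ 2 / (4 * (g s) ^ 2)
                + (4 * α * s * g s - s ^ 2) / (16 * (g s) ^ 2) - g s - α ^ 2 / 4))
        - (α * deriv (fun s : ℝ =>
            (s * deriv g s - g s) ^ 2 / (4 * (g s) ^ 2)
              + (4 * α * s * g s - s ^ 2) / (16 * (g s) ^ 2) - g s - α ^ 2 / 4) s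
            + 1 / 2) ^ 2 = 0 := by
  intro s hs
  have hpos : ∀ t ∈ I, t ≠ 0 := fun t ht => (hIpos ht).ne'
  exact sigma_form_of_hasDerivAt hI hs (hpos s hs) (hg1 s hs) (hgne s hs) rfl fun t ht =>
    hasDerivAt_sigmaHamiltonian_of_painleveIII (hpos t ht) (hg1 t ht) (hg2 t ht) (hgne t ht)
      (hode t ht)
end
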